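/- Let n ≥ 2 be an integer, let 2 ≤ a < A ≤ ∞, and let U : [a, A) → ℝ be a smooth solution of the expander ODE U²U'' + ((n−1−U²)/ρ + ρ/2)U' + ((n−1)/ρ²)(1−U²)U = 0 satisfying U'(ρ) < 0 and 0 < U(ρ) < 1 for all ρ ∈ [a, A). Then the limit lim_{ρ→A⁻} U(ρ) is strictly positive; equivalently, inf_{ρ ∈ [a,A)} U(ρ) > 0. -/

import Mathlib

open Real Set Filter

open Topology in
/-- If `F` has positive derivative at a zero, it is positive just to the right. -/
lemma stmt12_evPos {F : ℝ → ℝ} {x d : ℝ} (hd : HasDerivAt F d x) (h0 : F x = 0) (hdp : 0 < d) :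
    ∀ᶠ y in 𝓝[>] x, 0 < F y := by
  have hs : Tendsto (slope F x) (𝓝[>] x) (𝓝 d) := by
    have h1 := hasDerivWithinAt_iff_tendsto_slope.mp (hd.hasDerivWithinAt (s := Ioi x))
    exact h1.mono_left (nhdsWithin_mono _ (fun y hy => ⟨hy, ne_of_gt hy⟩))
  have hev : ∀ᶠ y in 𝓝[>] x, 0 < slope F x y := hs.eventually (eventually_gt_nhds hdp)
  filter_upwards [hev, self_mem_nhdsWithin] with y hy (hxy : x < y)
  rw [slope_def_field, h0, sub_zero, div_eq_mul_inv] at hy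
  have h2 := mul_pos hy (sub_pos.mpr hxy)
  rwa [mul_assoc, inv_mul_cancel₀ (ne_of_gt (sub_pos.mpr hxy)), mul_one] at h2

open Topology in
/-- A function that starts nonnegative and is positive just to the right of each of its
zeros stays nonnegative. -/
lemma stmt12_noCross {F : ℝ → ℝ} {b c : ℝ} (hcont : ContinuousOn F (Icc b c))
    (hb : 0 ≤ F b)
    (hzero : ∀ x ∈ Ico b c, F x = 0 → ∀ᶠ y in 𝓝[>] x, 0 < F y) :
    ∀ x ∈ Icc b c, 0 ≤ F x := by
  by_contra hcon
  push_neg at hcon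
  obtain ⟨x₂, hx₂, hFx₂⟩ := hcon
  set S := {x : ℝ | x ∈ Icc b x₂ ∧ 0 ≤ F x} with hS
  have hSclosed : IsClosed S := by
    have : S = Icc b x₂ ∩ F ⁻¹' (Ici 0) := by ext y; simp [hS]
    rw [this]
    exact (hcont.mono (Icc_subset_Icc_right hx₂.2)).preimage_isClosed_of_isClosed
      isClosed_Icc isClosed_Ici
  have hSne : S.Nonempty := ⟨b, ⟨le_refl b, hx₂.1⟩, hb⟩
  have hSbdd : BddAbove S := ⟨x₂, fun y hy => hy.1.2⟩
  set s₀ := sSup S with hs₀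
  have hs₀S : s₀ ∈ S := hSclosed.csSup_mem hSne hSbdd
  have hs₀x₂ : s₀ ≤ x₂ := hs₀S.1.2
  have hs₀lt : s₀ < x₂ := lt_of_le_of_ne hs₀x₂ (by
    intro h; rw [h] at hs₀S; exact absurd hs₀S.2 (not_le.mpr hFx₂))
  have hs₀Icc : s₀ ∈ Icc b c := ⟨hs₀S.1.1, le_trans hs₀x₂ hx₂.2⟩
  have hev : ∀ᶠ y in 𝓝[>] s₀, 0 < F y := by
    rcases lt_or_eq_of_le hs₀S.2 with hpos | heq
    · have hc : ContinuousWithinAt F (Icc b c) s₀ := hcont s₀ hs₀Icc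
      have h1 : 𝓝[Ioc s₀ x₂] s₀ = 𝓝[>] s₀ := nhdsWithin_Ioc_eq_nhdsGT hs₀lt
      have h2 : 𝓝[Ioc s₀ x₂] s₀ ≤ 𝓝[Icc b c] s₀ :=
        nhdsWithin_mono _ (fun y hy => ⟨le_trans hs₀S.1.1 (le_of_lt hy.1), le_trans hy.2 hx₂.2⟩)
      exact (hc.tendsto.mono_left (h1 ▸ h2)).eventually (eventually_gt_nhds hpos)
    · exact hzero s₀ ⟨hs₀S.1.1, lt_of_lt_of_le hs₀lt hx₂.2⟩ heq.symm
  have hlt : ∀ᶠ y in 𝓝[>] s₀, y < x₂ :=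
    eventually_nhdsWithin_of_eventually_nhds (eventually_lt_nhds hs₀lt)
  obtain ⟨y, hyF, hyx₂, hys₀'⟩ := (hev.and (hlt.and self_mem_nhdsWithin)).exists
  have hys₀ : s₀ < y := hys₀'
  have hyS : y ∈ S := ⟨⟨le_trans hs₀S.1.1 (le_of_lt hys₀), le_of_lt hyx₂⟩, le_of_lt hyF⟩
  exact absurd (le_csSup hSbdd hyS) (not_le.mpr hys₀)

/-- Left-hand side of the expander ODE
`U²U'' + ((n-1-U²)/ρ + ρ/2)U' + ((n-1)/ρ²)(1-U²)U = 0`. -/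
noncomputable def expanderLHS (n : ℕ) (U : ℝ → ℝ) (ρ : ℝ) : ℝ :=
  (U ρ)^2 * deriv (deriv U) ρ
    + ((((n:ℝ) - 1) - (U ρ)^2) / ρ + ρ / 2) * deriv U ρ
    + (((n:ℝ) - 1) / ρ^2) * (1 - (U ρ)^2) * U ρ

set_option maxHeartbeats 4000000 in
/-- If `U` solves the expander ODE on `[a, A)` (`2 ≤ a < A ≤ ∞`) with `U' < 0` and
`0 < U < 1`, then `U` stays bounded away from zero: `inf U > 0`. -/
theorem stmt12 (n : ℕ) (hn : 2 ≤ n) (a : ℝ) (ha : 2 ≤ a) (A : EReal) (hA : (a : EReal) < A)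
    (U : ℝ → ℝ)
    (hU : ContDiffOn ℝ (⊤ : ℕ∞) U {ρ : ℝ | a ≤ ρ ∧ (ρ : EReal) < A})
    (hode : ∀ ρ : ℝ, a ≤ ρ → (ρ : EReal) < A → expanderLHS n U ρ = 0)
    (hder : ∀ ρ : ℝ, a ≤ ρ → (ρ : EReal) < A → deriv U ρ < 0)
    (hbd : ∀ ρ : ℝ, a ≤ ρ → (ρ : EReal) < A → 0 < U ρ ∧ U ρ < 1) :
    ∃ c > (0:ℝ), ∀ ρ : ℝ, a ≤ ρ → (ρ : EReal) < A → c ≤ U ρ := by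
  have hcoe_le : ∀ {x y : ℝ}, x ≤ y → ((x:ℝ):EReal) ≤ ((y:ℝ):EReal) := fun h => by exact_mod_cast h
  have hcoe_lt : ∀ {x y : ℝ}, x < y → ((x:ℝ):EReal) < ((y:ℝ):EReal) := fun h => by exact_mod_cast h
  have hn2r : (2:ℝ) ≤ (n:ℝ) := by exact_mod_cast hn
  have hm1 : (1:ℝ) ≤ (n:ℝ) - 1 := by linarith
  -- choice of a base point a' with a < a' < A
  obtain ⟨z₀, hz₀1, hz₀2⟩ := exists_between hA
  set a' := z₀.toReal with ha'def
  have hz₀top : z₀ ≠ ⊤ := ne_top_of_lt hz₀2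
  have hz₀bot : z₀ ≠ ⊥ := ne_bot_of_gt hz₀1
  have hz₀coe : ((a' : ℝ) : EReal) = z₀ := EReal.coe_toReal hz₀top hz₀bot
  have haa' : a < a' := by
    rw [← EReal.coe_lt_coe_iff]; rw [hz₀coe]; exact hz₀1
  have ha'A : ((a':ℝ) : EReal) < A := by rw [hz₀coe]; exact hz₀2
  -- continuity of U
  have hUcont : ContinuousOn U {ρ : ℝ | a ≤ ρ ∧ (ρ : EReal) < A} := hU.continuousOn
  -- U is nonincreasing
  have hUanti : ∀ x y : ℝ, a ≤ x → x ≤ y → ((y:ℝ):EReal) < A → U y ≤ U x := by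
    intro x y hax hxy hyA
    rcases eq_or_lt_of_le hxy with h | h
    · rw [h]
    · have hsub : Icc x y ⊆ {ρ : ℝ | a ≤ ρ ∧ (ρ : EReal) < A} := by
        intro w hw
        exact ⟨le_trans hax hw.1, lt_of_le_of_lt (hcoe_le hw.2) hyA⟩
      have hmono := strictAntiOn_of_deriv_neg (convex_Icc x y) (hUcont.mono hsub) (by
        intro w hw
        rw [interior_Icc] at hw
        exact hder w (le_trans hax hw.1.le) (lt_trans (hcoe_lt hw.2) hyA))
      exact (hmono ⟨le_rfl, hxy⟩ ⟨hxy, le_rfl⟩ h).le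
  -- the open set O
  have hOopen : IsOpen {x : ℝ | a < x ∧ (x : EReal) < A} := by
    have : {x : ℝ | a < x ∧ (x : EReal) < A}
        = Ioi a ∩ (fun x : ℝ => (x : EReal)) ⁻¹' (Iio A) := by
      ext w; simp [mem_Ioi, mem_Iio]
    rw [this]
    exact isOpen_Ioi.inter (isOpen_Iio.preimage continuous_coe_real_ereal)
  have hOs : {x : ℝ | a < x ∧ (x : EReal) < A} ⊆ {ρ : ℝ | a ≤ ρ ∧ (ρ : EReal) < A} :=
    fun x hx => ⟨le_of_lt hx.1, hx.2⟩
  have hdU : ContDiffOn ℝ (⊤ : ℕ∞) (deriv U) {x : ℝ | a < x ∧ (x : EReal) < A} :=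
    (hU.mono hOs).deriv_of_isOpen hOopen (by simp)
  have hdUcont : ContinuousOn (deriv U) {x : ℝ | a < x ∧ (x : EReal) < A} := hdU.continuousOn
  have hdUdiff : ∀ x : ℝ, a < x → (x : EReal) < A →
      HasDerivAt (deriv U) (deriv (deriv U) x) x := by
    intro x h1 h2
    exact ((hdU.differentiableOn (by simp) x ⟨h1, h2⟩).differentiableAt
      (hOopen.mem_nhds ⟨h1, h2⟩)).hasDerivAt
  have hUdiff : ∀ x : ℝ, a ≤ x → (x : EReal) < A → HasDerivAt U (deriv U x) x := by
    intro x h1 h2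
    exact (differentiableAt_of_deriv_ne_zero (ne_of_lt (hder x h1 h2))).hasDerivAt
  -- rearranged ODE
  have hodeq : ∀ x : ℝ, a ≤ x → (x : EReal) < A →
      (U x)^2 * deriv (deriv U) x
        = ((((n:ℝ) - 1) - (U x)^2) / x + x / 2) * (-(deriv U x))
          - (((n:ℝ) - 1) / x^2) * (1 - (U x)^2) * U x := by
    intro x h1 h2
    have h := hode x h1 h2
    simp only [expanderLHS] at h
    linear_combination h

  -- the a priori bound on the slope
  set C₀ := max (-(deriv U a')) (((n:ℝ) - 1) / a^2) with hC₀def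
  have hC₀1 : -(deriv U a') ≤ C₀ := le_max_left _ _
  have hC₀2 : ((n:ℝ) - 1) / a^2 ≤ C₀ := le_max_right _ _
  have hC₀pos : 0 < C₀ := lt_of_lt_of_le (div_pos (by linarith) (by positivity)) hC₀2
  have step1 : ∀ x : ℝ, a' ≤ x → (x : EReal) < A → -C₀ ≤ deriv U x := by
    intro x hx hxA
    have hIccO : Icc a' x ⊆ {w : ℝ | a < w ∧ (w : EReal) < A} := by
      intro w hw; exact ⟨lt_of_lt_of_le haa' hw.1, lt_of_le_of_lt (hcoe_le hw.2) hxA⟩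
    have hcont : ContinuousOn (fun ρ => deriv U ρ + C₀) (Icc a' x) :=
      (hdUcont.mono hIccO).add continuousOn_const
    have hstart : 0 ≤ deriv U a' + C₀ := by linarith
    have hzero : ∀ w ∈ Ico a' x, (fun ρ => deriv U ρ + C₀) w = 0 →
        ∀ᶠ y in nhdsWithin w (Ioi w), 0 < (fun ρ => deriv U ρ + C₀) y := by
      intro w hw hFw
      simp only at hFw
      have hwa : a < w := lt_of_lt_of_le haa' hw.1
      have hwA : (w : EReal) < A := lt_trans (hcoe_lt hw.2) hxA
      have hp : deriv U w = -C₀ := by linarith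
      obtain ⟨hu0, hu1⟩ := hbd w hwa.le hwA
      have heq := hodeq w hwa.le hwA
      have hw2 : 2 < w := lt_of_le_of_lt ha (lt_of_lt_of_le haa' hw.1)
      have hT : 1 ≤ (((n:ℝ) - 1) - (U w)^2) / w + w / 2 := by
        have h1 : 0 ≤ (((n:ℝ) - 1) - (U w)^2) / w := div_nonneg (by nlinarith) (by linarith)
        linarith
      have hd2 : ((n:ℝ) - 1) / w^2 < C₀ := by
        refine lt_of_lt_of_le ?_ hC₀2
        apply div_lt_div_of_pos_left (by linarith) (by positivity) (by nlinarith)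
      have h6 : (1 - (U w)^2) * (U w) ≤ 1 := by
        have hcube : 0 ≤ (U w)^3 := by positivity
        nlinarith
      have hfrac : (((n:ℝ) - 1) / w^2) * (1 - (U w)^2) * (U w) ≤ ((n:ℝ) - 1) / w^2 := by
        have hq : (0:ℝ) < ((n:ℝ) - 1) / w^2 := by positivity
        nlinarith [mul_le_mul_of_nonneg_left h6 (le_of_lt hq)]
      have heq' : (U w)^2 * deriv (deriv U) w
          = ((((n:ℝ) - 1) - (U w)^2) / w + w / 2) * C₀
            - (((n:ℝ) - 1) / w^2) * (1 - (U w)^2) * U w := by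
        rw [heq, hp]; ring
      have hq2 : 0 < (U w)^2 * deriv (deriv U) w := by
        have hTC : C₀ ≤ ((((n:ℝ) - 1) - (U w)^2) / w + w / 2) * C₀ := by
          nlinarith [mul_nonneg (sub_nonneg.mpr hT) hC₀pos.le]
        linarith
      have hdd : 0 < deriv (deriv U) w := by
        by_contra hc; push_neg at hc
        nlinarith [sq_nonneg (U w)]
      exact stmt12_evPos ((hdUdiff w hwa hwA).add_const C₀) hFw hdd
    have := stmt12_noCross hcont hstart hzero x ⟨hx, le_rfl⟩
    linarith
  -- threshold
  set ε₀ := min (1/4 : ℝ) (1/(4*C₀)) with hε₀def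
  have hε₀pos : 0 < ε₀ := lt_min (by norm_num) (by positivity)
  have hε₀14 : ε₀ ≤ 1/4 := min_le_left _ _
  have hε₀C : ε₀ ≤ 1/(4*C₀) := min_le_right _ _
  by_cases hsmall : ∃ x : ℝ, a' ≤ x ∧ (x : EReal) < A ∧ U x < ε₀
  case neg =>
    push_neg at hsmall
    refine ⟨ε₀, hε₀pos, ?_⟩
    intro ρ hρ hρA
    rcases le_or_gt a' ρ with h | h
    · exact hsmall ρ h hρA
    · exact le_trans (hsmall a' le_rfl ha'A) (hUanti ρ a' hρ h.le ha'A)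
  case pos =>
    obtain ⟨ρs, hρs1, hρs2, hρs3⟩ := hsmall
    have hρsa : a < ρs := lt_of_lt_of_le haa' hρs1
    have hρs4 : 2 < ρs := lt_of_le_of_lt ha hρsa
    obtain ⟨hus0, hus1⟩ := hbd ρs hρsa.le hρs2
    have husC : -(deriv U ρs) ≤ C₀ := by linarith [step1 ρs hρs1 hρs2]
    have hdρs : deriv U ρs < 0 := hder ρs hρsa.le hρs2
    by_cases hbar : ∃ x : ℝ, ρs ≤ x ∧ (x : EReal) < A ∧
        -(deriv U x) ≤ (2*((n:ℝ)-1) / (((n:ℝ)-2)*x + x^3/2)) * U x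
    case pos =>
      obtain ⟨ρ₁, hρ₁1, hρ₁2, hρ₁3⟩ := hbar
      have hρ₁a : a < ρ₁ := lt_of_lt_of_le hρsa hρ₁1
      have hρ₁4 : 2 < ρ₁ := lt_of_le_of_lt ha hρ₁a
      obtain ⟨hu₁0, hu₁1⟩ := hbd ρ₁ hρ₁a.le hρ₁2
      refine ⟨U ρ₁ * Real.exp (-(2*((n:ℝ)-1)/ρ₁^2)), by positivity, ?_⟩
      have hcρ₁ : U ρ₁ * Real.exp (-(2*((n:ℝ)-1)/ρ₁^2)) ≤ U ρ₁ := by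
        have h1 : Real.exp (-(2*((n:ℝ)-1)/ρ₁^2)) ≤ 1 := by
          rw [Real.exp_le_one_iff]
          have : 0 < 2*((n:ℝ)-1)/ρ₁^2 := by positivity
          linarith
        exact mul_le_of_le_one_right hu₁0.le h1
      intro ρ hρ hρA
      rcases le_or_gt ρ ρ₁ with hcase | hcase
      · exact le_trans hcρ₁ (hUanti ρ ρ₁ hρ hcase hρ₁2)
      · -- barrier invariance on [ρ₁, ρ]
        have hsubO : Icc ρ₁ ρ ⊆ {x : ℝ | a < x ∧ (x : EReal) < A} := by
          intro w hw
          exact ⟨lt_of_lt_of_le hρ₁a hw.1, lt_of_le_of_lt (hcoe_le hw.2) hρA⟩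
        have hIccs : Icc ρ₁ ρ ⊆ {x : ℝ | a ≤ x ∧ (x : EReal) < A} := fun w hw => hOs (hsubO hw)
        have hDposOn : ∀ w : ℝ, 2 < w → (0:ℝ) < ((n:ℝ)-2)*w + w^3/2 := by
          intro w hw2
          have h1 : 0 ≤ ((n:ℝ)-2)*w := mul_nonneg (by linarith) (by linarith)
          have h2 : (0:ℝ) < w^3 := by positivity
          linarith
        have hFcont : ContinuousOn
            (fun t => deriv U t + (2*((n:ℝ)-1)/(((n:ℝ)-2)*t + t^3/2)) * U t) (Icc ρ₁ ρ) := by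
          apply ContinuousOn.add (hdUcont.mono hsubO)
          apply ContinuousOn.mul _ (hUcont.mono hIccs)
          apply ContinuousOn.div continuousOn_const
          · exact ((continuous_const.mul continuous_id).add
              ((continuous_pow 3).div_const 2)).continuousOn
          · intro t ht
            have ht2 : 2 < t := lt_of_lt_of_le (lt_of_le_of_lt ha (lt_of_lt_of_le hρ₁a le_rfl)) ht.1
            exact ne_of_gt (hDposOn t (lt_of_lt_of_le hρ₁4 ht.1))
        have hFstart : 0 ≤ deriv U ρ₁ + (2*((n:ℝ)-1)/(((n:ℝ)-2)*ρ₁ + ρ₁^3/2)) * U ρ₁ := by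
          linarith
        have hFzero : ∀ w ∈ Ico ρ₁ ρ,
            (fun t => deriv U t + (2*((n:ℝ)-1)/(((n:ℝ)-2)*t + t^3/2)) * U t) w = 0 →
            ∀ᶠ y in nhdsWithin w (Ioi w),
              0 < (fun t => deriv U t + (2*((n:ℝ)-1)/(((n:ℝ)-2)*t + t^3/2)) * U t) y := by
          intro w hw hFw
          simp only at hFw
          have hwa : a < w := lt_of_lt_of_le hρ₁a hw.1
          have hwA : (w : EReal) < A := lt_trans (hcoe_lt hw.2) hρA
          have hw2 : 2 < w := lt_of_lt_of_le hρ₁4 hw.1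
          have hwρs : ρs ≤ w := le_trans hρ₁1 hw.1
          obtain ⟨hu0, hu1⟩ := hbd w hwa.le hwA
          have huu : U w ≤ U ρs := hUanti ρs w hρsa.le hwρs hwA
          have hu14 : U w ≤ 1/4 := by linarith
          have hDpos : 0 < ((n:ℝ)-2)*w + w^3/2 := hDposOn w hw2
          have hD0 : ((n:ℝ)-2)*w + w^3/2 ≠ 0 := ne_of_gt hDpos
          have hw0 : w ≠ 0 := by linarith
          have hune : U w ≠ 0 := ne_of_gt hu0
          have hΨpos : 0 < 2*((n:ℝ)-1)/(((n:ℝ)-2)*w + w^3/2) := by positivity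
          have hp : deriv U w = -((2*((n:ℝ)-1)/(((n:ℝ)-2)*w + w^3/2)) * U w) := by linarith
          have heq := hodeq w hwa.le hwA
          -- derivative of the barrier function
          have hDd : HasDerivAt (fun t : ℝ => ((n:ℝ)-2)*t + t^3/2) (((n:ℝ)-2) + 3*w^2/2) w := by
            have h1 : HasDerivAt (fun t : ℝ => ((n:ℝ)-2)*t) ((n:ℝ)-2) w := by
              simpa using (hasDerivAt_id w).const_mul ((n:ℝ)-2)
            have h2 : HasDerivAt (fun t : ℝ => t^3/2) (3*w^2/2) w := by
              have h2x := (hasDerivAt_pow 3 w).div_const 2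
              exact h2x.congr_deriv (by norm_num)
            exact h1.add h2
          have hΨd : HasDerivAt (fun t : ℝ => 2*((n:ℝ)-1)/(((n:ℝ)-2)*t + t^3/2))
              (-(2*((n:ℝ)-1)*(((n:ℝ)-2) + 3*w^2/2))/((((n:ℝ)-2))*w + w^3/2)^2) w := by
            have h3 := (hasDerivAt_const w (2*((n:ℝ)-1))).div hDd hD0
            refine h3.congr_deriv ?_
            ring
          have hF : HasDerivAt
              (fun t => deriv U t + (2*((n:ℝ)-1)/(((n:ℝ)-2)*t + t^3/2)) * U t)
              (deriv (deriv U) w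
                + ((-(2*((n:ℝ)-1)*(((n:ℝ)-2) + 3*w^2/2))/((((n:ℝ)-2))*w + w^3/2)^2) * U w
                  + (2*((n:ℝ)-1)/(((n:ℝ)-2)*w + w^3/2)) * deriv U w)) w :=
            (hdUdiff w hwa hwA).add (hΨd.mul (hUdiff w hwa.le hwA))
          -- key positivity of the derivative at the zero
          have heq2 : U w * deriv (deriv U) w
              = ((((n:ℝ)-1) - (U w)^2)/w + w/2) * (2*((n:ℝ)-1)/(((n:ℝ)-2)*w + w^3/2))
                - (((n:ℝ)-1)/w^2) * (1 - (U w)^2) := by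
            rw [hp] at heq
            apply mul_right_cancel₀ hune
            linear_combination heq
          have hθΨ : (((n:ℝ)-2)/w + w/2) * (2*((n:ℝ)-1)/(((n:ℝ)-2)*w + w^3/2))
              = 2*(((n:ℝ)-1)/w^2) := by
            have hθD : (((n:ℝ)-2)/w + w/2) = ((((n:ℝ)-2))*w + w^3/2)/w^2 := by
              field_simp
            rw [hθD, div_mul_div_comm, mul_comm (w^2) ((((n:ℝ)-2))*w + w^3/2),
              mul_div_mul_left _ _ hD0, mul_div_assoc]
          have huaux1 : (0:ℝ) ≤ 1 - U w := by linarith only [hu1]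
          have huaux2 : (0:ℝ) ≤ 1 + U w := by linarith only [hu0]
          have husq1 : (U w)^2 ≤ 1 := by
            nlinarith only [mul_nonneg huaux1 huaux2]
          have hTθ : (((n:ℝ)-2)/w + w/2) ≤ ((((n:ℝ)-1) - (U w)^2)/w + w/2) := by
            have h1 : ((n:ℝ)-2)/w ≤ (((n:ℝ)-1) - (U w)^2)/w :=
              (div_le_div_iff_of_pos_right (by linarith only [hw2])).mpr (by linarith only [husq1])
            linarith only [h1]
          have hM : (0:ℝ) ≤ (n:ℝ)-2 := by linarith
          have hw4 : (4:ℝ) ≤ w^2 := by nlinarith only [sq_nonneg (w-2), hw2]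
          have hw16 : (16:ℝ) ≤ w^4 := by nlinarith only [sq_nonneg (w^2-4), hw4]
          have hkaux1 : (0:ℝ) ≤ w^2 - 4 := by linarith only [hw4]
          have hkaux2 : (0:ℝ) ≤ w^4 - 16 := by linarith only [hw16]
          have hkey : 4*((n:ℝ)-1)*w^2 ≤ ((((n:ℝ)-2))*w + w^3/2)^2 := by
            nlinarith only [mul_nonneg (mul_nonneg hM (sq_nonneg w)) hkaux1,
              mul_nonneg (sq_nonneg ((n:ℝ)-2)) (sq_nonneg w),
              mul_nonneg (sq_nonneg w) hkaux2]
          have hΨsq : (2*((n:ℝ)-1)/(((n:ℝ)-2)*w + w^3/2))^2 ≤ ((n:ℝ)-1)/w^2 := by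
            rw [div_pow, div_le_div_iff₀ (by positivity) (by positivity)]
            have h2 := mul_le_mul_of_nonneg_left hkey (by linarith only [hm1] : (0:ℝ) ≤ (n:ℝ)-1)
            linarith only [h2]
          have hΨ'bd : 2*((n:ℝ)-1)*(((n:ℝ)-2) + 3*w^2/2) / ((((n:ℝ)-2))*w + w^3/2)^2
              ≤ 3*(((n:ℝ)-1)/w^2) := by
            rw [div_le_iff₀ (by positivity)]
            have haux1 : (0:ℝ) ≤ 3*w^2 - 2 := by linarith only [hw4]
            have haux2 : (0:ℝ) ≤ w^2 - 4 := by linarith only [hw4]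
            have haux3 : (0:ℝ) ≤ (3/4)*w^4 - 3*w^2 := by
              nlinarith only [mul_nonneg haux2 (sq_nonneg w)]
            have hpoly : 2*(((n:ℝ)-2) + 3*w^2/2) * w^2 ≤ 3*((((n:ℝ)-2))*w + w^3/2)^2 := by
              nlinarith only [mul_nonneg (mul_nonneg hM (sq_nonneg w)) haux1,
                mul_nonneg (sq_nonneg ((n:ℝ)-2)) (sq_nonneg w),
                mul_nonneg (sq_nonneg w) haux3]
            have h3 := mul_le_mul_of_nonneg_left hpoly (by linarith only [hm1] : (0:ℝ) ≤ (n:ℝ)-1)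
            have h4 : 3*(((n:ℝ)-1)/w^2) * ((((n:ℝ)-2))*w + w^3/2)^2
                = ((n:ℝ)-1) * (3*((((n:ℝ)-2))*w + w^3/2)^2) / w^2 := by ring
            rw [h4, le_div_iff₀ (by positivity : (0:ℝ) < w^2)]
            linarith only [h3]
          have hu16aux1 : (0:ℝ) ≤ 1/4 - U w := by linarith only [hu14]
          have hu16aux2 : (0:ℝ) ≤ 1/4 + U w := by linarith only [hu0]
          have hu16 : (U w)^2 ≤ 1/16 := by
            nlinarith only [mul_nonneg hu16aux1 hu16aux2]
          have hd2pos : 0 < ((n:ℝ)-1)/w^2 := by positivity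
          -- multiply the target derivative by u > 0
          have hxpand : U w * (deriv (deriv U) w
                + ((-(2*((n:ℝ)-1)*(((n:ℝ)-2) + 3*w^2/2))/((((n:ℝ)-2))*w + w^3/2)^2) * U w
                  + (2*((n:ℝ)-1)/(((n:ℝ)-2)*w + w^3/2)) * deriv U w))
              = U w * deriv (deriv U) w
                + (-(2*((n:ℝ)-1)*(((n:ℝ)-2) + 3*w^2/2))/((((n:ℝ)-2))*w + w^3/2)^2) * (U w)^2
                - (2*((n:ℝ)-1)/(((n:ℝ)-2)*w + w^3/2))^2 * (U w)^2 := by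
            rw [hp]; ring
          have hc1 : 2*(((n:ℝ)-1)/w^2)
              ≤ ((((n:ℝ)-1) - (U w)^2)/w + w/2) * (2*((n:ℝ)-1)/(((n:ℝ)-2)*w + w^3/2)) := by
            rw [← hθΨ]
            exact mul_le_mul_of_nonneg_right hTθ hΨpos.le
          have hc2 : (((n:ℝ)-1)/w^2) * (1 - (U w)^2) ≤ ((n:ℝ)-1)/w^2 := by
            linarith only [mul_nonneg hd2pos.le (sq_nonneg (U w))]
          have hc3 : ((2*((n:ℝ)-1)/(((n:ℝ)-2)*w + w^3/2))^2
                + 2*((n:ℝ)-1)*(((n:ℝ)-2) + 3*w^2/2) / ((((n:ℝ)-2))*w + w^3/2)^2) * (U w)^2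
              ≤ (4*(((n:ℝ)-1)/w^2)) * (1/16) := by
            apply mul_le_mul (by linarith) hu16 (sq_nonneg _) (by positivity)
          have hdF : 0 < deriv (deriv U) w
              + ((-(2*((n:ℝ)-1)*(((n:ℝ)-2) + 3*w^2/2))/((((n:ℝ)-2))*w + w^3/2)^2) * U w
                + (2*((n:ℝ)-1)/(((n:ℝ)-2)*w + w^3/2)) * deriv U w) := by
            have hmain : 0 < U w * (deriv (deriv U) w
                + ((-(2*((n:ℝ)-1)*(((n:ℝ)-2) + 3*w^2/2))/((((n:ℝ)-2))*w + w^3/2)^2) * U w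
                  + (2*((n:ℝ)-1)/(((n:ℝ)-2)*w + w^3/2)) * deriv U w)) := by
              rw [hxpand, heq2]
              have hneg : (-(2*((n:ℝ)-1)*(((n:ℝ)-2) + 3*w^2/2))/((((n:ℝ)-2))*w + w^3/2)^2) * (U w)^2
                  - (2*((n:ℝ)-1)/(((n:ℝ)-2)*w + w^3/2))^2 * (U w)^2
                  = -(((2*((n:ℝ)-1)/(((n:ℝ)-2)*w + w^3/2))^2
                    + 2*((n:ℝ)-1)*(((n:ℝ)-2) + 3*w^2/2) / ((((n:ℝ)-2))*w + w^3/2)^2) * (U w)^2) := by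
                ring
              linarith only [hneg.le, hneg.ge, hc1, hc2, hc3, hd2pos]
            by_contra hcon
            push_neg at hcon
            linarith only [hmain, mul_nonneg hu0.le (neg_nonneg.mpr hcon)]
          exact stmt12_evPos hF hFw hdF
        have hFpos := stmt12_noCross hFcont hFstart hFzero
        -- monotone logarithmic bound
        have hgmono : MonotoneOn (fun t => Real.log (U t) - 2*((n:ℝ)-1)/t^2) (Icc ρ₁ ρ) := by
          have hderivg : ∀ t ∈ Ioo ρ₁ ρ, HasDerivAt
              (fun t => Real.log (U t) - 2*((n:ℝ)-1)/t^2)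
              (deriv U t / U t + 4*((n:ℝ)-1)/t^3) t := by
            intro t ht
            have htO := hsubO (Ioo_subset_Icc_self ht)
            obtain ⟨hu0, hu1⟩ := hbd t htO.1.le htO.2
            have ht0 : t ≠ 0 := by
              have : 2 < t := lt_of_lt_of_le hρ₁4 ht.1.le
              linarith
            have hlogU := (Real.hasDerivAt_log (ne_of_gt hu0)).comp t (hUdiff t htO.1.le htO.2)
            have hpow := (hasDerivAt_const t (2*((n:ℝ)-1))).div (hasDerivAt_pow 2 t)
              (pow_ne_zero 2 ht0)
            have := hlogU.sub hpow
            refine this.congr_deriv ?_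
            field_simp
            ring
          apply monotoneOn_of_deriv_nonneg (convex_Icc ρ₁ ρ)
          · apply ContinuousOn.sub
            · apply ContinuousOn.log (hUcont.mono hIccs)
              intro t ht
              exact ne_of_gt (hbd t (hIccs ht).1 (hIccs ht).2).1
            · apply ContinuousOn.div continuousOn_const (continuous_pow 2).continuousOn
              intro t ht
              have : 2 < t := lt_of_lt_of_le hρ₁4 ht.1
              positivity
          · intro t ht
            rw [interior_Icc] at ht
            exact (hderivg t ht).differentiableAt.differentiableWithinAt
          · intro t ht
            rw [interior_Icc] at ht
            rw [(hderivg t ht).deriv]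
            have htO := hsubO (Ioo_subset_Icc_self ht)
            obtain ⟨hu0, hu1⟩ := hbd t htO.1.le htO.2
            have ht2 : 2 < t := lt_of_lt_of_le hρ₁4 ht.1.le
            have hDpos : 0 < ((n:ℝ)-2)*t + t^3/2 := hDposOn t ht2
            have hFt := hFpos t (Ioo_subset_Icc_self ht)
            have h1 : -(2*((n:ℝ)-1)/(((n:ℝ)-2)*t + t^3/2)) ≤ deriv U t / U t := by
              rw [le_div_iff₀ hu0]
              linarith only [hFt]
            have h2 : 2*((n:ℝ)-1)/(((n:ℝ)-2)*t + t^3/2) ≤ 4*((n:ℝ)-1)/t^3 := by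
              rw [div_le_div_iff₀ hDpos (by positivity)]
              have hgaux1 : (0:ℝ) ≤ (n:ℝ)-1 := by linarith only [hm1]
              have hgaux2 : (0:ℝ) ≤ (n:ℝ)-2 := by linarith only [hn2r]
              have hgaux3 : (0:ℝ) ≤ t := by linarith only [ht2]
              linarith only [mul_nonneg (mul_nonneg hgaux1 hgaux2) hgaux3]
            linarith
        -- conclude
        have hg := hgmono (left_mem_Icc.mpr hcase.le) (right_mem_Icc.mpr hcase.le) hcase.le
        simp only at hg
        obtain ⟨huρ0, huρ1⟩ := hbd ρ hρ hρA
        have hρpos : (0:ℝ) < ρ := by linarith [lt_of_lt_of_le hρ₁4 hcase.le]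
        have hfrac : (0:ℝ) < 2*((n:ℝ)-1)/ρ^2 := by positivity
        have hlogc : Real.log (U ρ₁ * Real.exp (-(2*((n:ℝ)-1)/ρ₁^2)))
            = Real.log (U ρ₁) - 2*((n:ℝ)-1)/ρ₁^2 := by
          rw [Real.log_mul (ne_of_gt hu₁0) (Real.exp_ne_zero _), Real.log_exp]
          ring
        have hloge : Real.log (U ρ₁ * Real.exp (-(2*((n:ℝ)-1)/ρ₁^2))) ≤ Real.log (U ρ) := by
          rw [hlogc]
          linarith
        have := Real.exp_le_exp.mpr hloge
        rwa [Real.exp_log (by positivity), Real.exp_log huρ0] at this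
    case neg =>
      push_neg at hbar
      -- On [ρs, A) the slope is always steeper than the barrier; then U'' is strongly
      -- positive and -U' decays exponentially, so the total further drop of U is < U ρs / 2.
      set lam := 1/(2*(U ρs)^2) with hlamdef
      have hlampos : 0 < lam := by positivity
      -- pointwise lower bound for the second derivative
      have hQpt : ∀ w : ℝ, ρs ≤ w → (w : EReal) < A →
          lam * (-(deriv U w)) ≤ deriv (deriv U) w := by
        intro w hw hwA
        have hwa : a < w := lt_of_lt_of_le hρsa hw
        have hw2 : 2 < w := lt_of_le_of_lt ha hwa
        obtain ⟨hu0, hu1⟩ := hbd w hwa.le hwA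
        have huu : U w ≤ U ρs := hUanti ρs w hρsa.le hw hwA
        have hy := hbar w hw hwA
        have hypos : 0 < -(deriv U w) := by linarith [hder w hwa.le hwA]
        have heq := hodeq w hwa.le hwA
        have hDpos : 0 < ((n:ℝ)-2)*w + w^3/2 := by nlinarith
        have hΨpos : 0 < 2*((n:ℝ)-1) / (((n:ℝ)-2)*w + w^3/2) := by positivity
        have hw0 : w ≠ 0 := by linarith
        have hD0 : ((n:ℝ)-2)*w + w^3/2 ≠ 0 := ne_of_gt hDpos
        have hθΨ : (((n:ℝ)-2)/w + w/2) * (2*((n:ℝ)-1)/(((n:ℝ)-2)*w + w^3/2))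
            = 2*(((n:ℝ)-1)/w^2) := by
          have hθD : (((n:ℝ)-2)/w + w/2) = ((((n:ℝ)-2))*w + w^3/2)/w^2 := by
            field_simp
          rw [hθD, div_mul_div_comm, mul_comm (w^2) ((((n:ℝ)-2))*w + w^3/2),
            mul_div_mul_left _ _ hD0, mul_div_assoc]
        have hθpos : 0 ≤ ((n:ℝ)-2)/w + w/2 :=
          add_nonneg (div_nonneg (by linarith) (by linarith)) (by linarith)
        have hTθ : (((n:ℝ)-2)/w + w/2) ≤ ((((n:ℝ)-1) - (U w)^2)/w + w/2) := by
          have h1 : ((n:ℝ)-2)/w ≤ (((n:ℝ)-1) - (U w)^2)/w :=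
            (div_le_div_iff_of_pos_right (by linarith)).mpr (by nlinarith)
          linarith
        have hTw : w/2 ≤ ((((n:ℝ)-1) - (U w)^2)/w + w/2) := by
          have h1 : 0 ≤ (((n:ℝ)-1) - (U w)^2)/w := div_nonneg (by nlinarith) (by linarith)
          linarith
        -- the forcing term is at most half of the damping term
        have hstep1 : (((n:ℝ)-1)/w^2) * (1 - (U w)^2) * U w
            ≤ ((((n:ℝ)-1) - (U w)^2)/w + w/2) * (-(deriv U w)) / 2 := by
          have h1 : (((n:ℝ)-1)/w^2) * (1 - (U w)^2) * U w ≤ (((n:ℝ)-1)/w^2) * U w := by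
            have hq : (0:ℝ) < ((n:ℝ)-1)/w^2 := by positivity
            linarith [mul_nonneg hq.le (pow_nonneg hu0.le 3)]
          have h2 : (((n:ℝ)-1)/w^2) * U w = (((n:ℝ)-2)/w + w/2)
              * ((2*((n:ℝ)-1)/(((n:ℝ)-2)*w + w^3/2)) * U w) / 2 := by
            linear_combination (-(U w) / 2) * hθΨ
          have h3 : (((n:ℝ)-2)/w + w/2) * ((2*((n:ℝ)-1)/(((n:ℝ)-2)*w + w^3/2)) * U w) / 2
              ≤ (((n:ℝ)-2)/w + w/2) * (-(deriv U w)) / 2 := by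
            have := mul_le_mul_of_nonneg_left hy.le hθpos
            linarith
          have h4 : (((n:ℝ)-2)/w + w/2) * (-(deriv U w)) / 2
              ≤ ((((n:ℝ)-1) - (U w)^2)/w + w/2) * (-(deriv U w)) / 2 := by
            have := mul_le_mul_of_nonneg_right hTθ hypos.le
            linarith
          linarith
        -- hence U'' u² ≥ w y / 4 ≥ y/2
        have hq2 : (-(deriv U w)) * w / 4 ≤ (U w)^2 * deriv (deriv U) w := by
          have h5 := mul_le_mul_of_nonneg_right hTw hypos.le
          linarith [heq, hstep1, h5]
        -- conclude lam * y ≤ U''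
        have hu2pos : 0 < (U w)^2 := by positivity
        have husq : (U w)^2 ≤ (U ρs)^2 := by nlinarith
        have husne : U ρs ≠ 0 := ne_of_gt hus0
        have h6 : lam * (U ρs)^2 = 1/2 := by
          rw [hlamdef]; field_simp
        apply le_of_mul_le_mul_right _ hu2pos
        have h7 : lam * (-(deriv U w)) * (U w)^2 ≤ lam * (-(deriv U w)) * (U ρs)^2 :=
          mul_le_mul_of_nonneg_left husq (mul_nonneg hlampos.le hypos.le)
        have h8 : lam * (-(deriv U w)) * (U ρs)^2 = (-(deriv U w)) / 2 := by
          rw [hlamdef]; field_simp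
        have h9 : (-(deriv U w)) / 2 ≤ (-(deriv U w)) * w / 4 := by
          linarith [mul_nonneg hypos.le (by linarith : (0:ℝ) ≤ w - 2)]
        linarith [h7, h8, h9, hq2]
      -- conclusion of case (i)
      refine ⟨U ρs / 2, by positivity, ?_⟩
      intro ρ hρ hρA
      rcases le_or_gt ρ ρs with h | h
      · linarith [hUanti ρ ρs hρ h hρs2]
      · -- exponential decay of -U' on [ρs, ρ]
        have hsubO : Icc ρs ρ ⊆ {x : ℝ | a < x ∧ (x : EReal) < A} := by
          intro w hw
          exact ⟨lt_of_lt_of_le hρsa hw.1, lt_of_le_of_lt (hcoe_le hw.2) hρA⟩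
        have hIccs : Icc ρs ρ ⊆ {x : ℝ | a ≤ x ∧ (x : EReal) < A} := fun w hw => hOs (hsubO hw)
        have hQanti : AntitoneOn (fun t => Real.log (-(deriv U t)) + lam * t) (Icc ρs ρ) := by
          have hderivQ : ∀ t ∈ Ioo ρs ρ, HasDerivAt (fun t => Real.log (-(deriv U t)) + lam * t)
              ((-(deriv (deriv U) t)) / (-(deriv U t)) + lam) t := by
            intro t ht
            have htO := hsubO (Ioo_subset_Icc_self ht)
            have hyt : 0 < -(deriv U t) := by linarith [hder t htO.1.le htO.2]
            have hneg : HasDerivAt (fun t => -(deriv U t)) (-(deriv (deriv U) t)) t :=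
              (hdUdiff t htO.1 htO.2).neg
            have hlog := (Real.hasDerivAt_log (ne_of_gt hyt)).comp t hneg
            have hlam : HasDerivAt (fun t : ℝ => lam * t) lam t := by
              simpa using (hasDerivAt_id t).const_mul lam
            have := hlog.add hlam
            refine this.congr_deriv ?_
            field_simp
          apply antitoneOn_of_deriv_nonpos (convex_Icc ρs ρ)
          · apply ContinuousOn.add _ ((continuous_const.mul continuous_id).continuousOn)
            apply ContinuousOn.log ((hdUcont.mono hsubO).neg)
            intro t ht
            have htO := hsubO ht
            have := hder t htO.1.le htO.2
            intro hzero
            linarith [neg_eq_zero.mp hzero]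
          · intro t ht
            rw [interior_Icc] at ht
            exact (hderivQ t ht).differentiableAt.differentiableWithinAt
          · intro t ht
            rw [interior_Icc] at ht
            rw [(hderivQ t ht).deriv]
            have htO := hsubO (Ioo_subset_Icc_self ht)
            have hyt : 0 < -(deriv U t) := by linarith [hder t htO.1.le htO.2]
            have hQ := hQpt t ht.1.le htO.2
            have h1 : (-(deriv (deriv U) t)) / (-(deriv U t)) ≤ -lam := by
              rw [div_le_iff₀ hyt]
              nlinarith
            linarith
        -- exponential bound on -U'
        have hyle : ∀ t : ℝ, ρs ≤ t → t ≤ ρ →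
            -(deriv U t) ≤ (-(deriv U ρs)) * Real.exp (-lam * (t - ρs)) := by
          intro t h1 h2
          have htmem : t ∈ Icc ρs ρ := ⟨h1, h2⟩
          have htO := hsubO htmem
          have hyt : 0 < -(deriv U t) := by linarith [hder t htO.1.le htO.2]
          have hQle := hQanti ⟨le_rfl, h.le⟩ htmem h1
          simp only at hQle
          have hlogle : Real.log (-(deriv U t))
              ≤ Real.log ((-(deriv U ρs)) * Real.exp (-lam * (t - ρs))) := by
            rw [Real.log_mul (by linarith : -(deriv U ρs) ≠ 0) (Real.exp_ne_zero _),
              Real.log_exp]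
            linarith
          have := Real.exp_le_exp.mpr hlogle
          rwa [Real.exp_log hyt,
            Real.exp_log (mul_pos (by linarith : (0:ℝ) < -(deriv U ρs)) (Real.exp_pos _))] at this
        -- integrate the bound
        have hylam0 : 0 ≤ (-(deriv U ρs))/lam := div_nonneg (by linarith) hlampos.le
        have hRmono : MonotoneOn
            (fun t => U t - ((-(deriv U ρs))/lam) * Real.exp (-lam * (t - ρs))) (Icc ρs ρ) := by
          have hderivR : ∀ t ∈ Ioo ρs ρ, HasDerivAt
              (fun t => U t - ((-(deriv U ρs))/lam) * Real.exp (-lam * (t - ρs)))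
              (deriv U t + (-(deriv U ρs)) * Real.exp (-lam * (t - ρs))) t := by
            intro t ht
            have htO := hsubO (Ioo_subset_Icc_self ht)
            have hlin : HasDerivAt (fun t : ℝ => -lam * (t - ρs)) (-lam) t := by
              simpa using ((hasDerivAt_id t).sub_const ρs).const_mul (-lam)
            have hexp := hlin.exp
            have h3 := (hUdiff t htO.1.le htO.2).sub (hexp.const_mul ((-(deriv U ρs))/lam))
            refine h3.congr_deriv ?_
            have hlamne : lam ≠ 0 := ne_of_gt hlampos
            field_simp
            ring
          apply monotoneOn_of_deriv_nonneg (convex_Icc ρs ρ)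
          · apply ContinuousOn.sub ((hUcont.mono hIccs))
            exact (continuous_const.mul ((continuous_const.mul
              (continuous_id.sub continuous_const)).rexp)).continuousOn
          · intro t ht
            rw [interior_Icc] at ht
            exact (hderivR t ht).differentiableAt.differentiableWithinAt
          · intro t ht
            rw [interior_Icc] at ht
            rw [(hderivR t ht).deriv]
            have hb := hyle t ht.1.le ht.2.le
            linarith
        -- conclude
        have hfin := hRmono (left_mem_Icc.mpr h.le) (right_mem_Icc.mpr h.le) h.le
        simp only at hfin
        have hexp1 : Real.exp (-lam * (ρs - ρs)) = 1 := by simp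
        rw [hexp1, mul_one] at hfin
        have h8 : 0 ≤ (-(deriv U ρs))/lam * Real.exp (-lam * (ρ - ρs)) :=
          mul_nonneg hylam0 (Real.exp_pos _).le
        have h9 : U ρs - (-(deriv U ρs))/lam ≤ U ρ := by linarith
        have hOverLam : (-(deriv U ρs))/lam = 2*(U ρs)^2*(-(deriv U ρs)) := by
          rw [hlamdef]
          field_simp
        have h4 : U ρs * (4*C₀) < 1 := by
          have h5 : ε₀ * (4*C₀) ≤ 1 :=
            (le_div_iff₀ (by positivity : (0:ℝ) < 4*C₀)).mp hε₀C
          have h6 := mul_lt_mul_of_pos_right hρs3 (by positivity : (0:ℝ) < 4*C₀)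
          linarith
        have hsmall2 : 2*(U ρs)^2*(-(deriv U ρs)) < U ρs / 2 := by
          have h10 : 2*(U ρs)^2*C₀ = (U ρs*(4*C₀))*(U ρs)/2 := by ring
          have h11 : (U ρs*(4*C₀))*(U ρs) < 1*(U ρs) := mul_lt_mul_of_pos_right h4 hus0
          have h12 : 2*(U ρs)^2*(-(deriv U ρs)) ≤ 2*(U ρs)^2*C₀ :=
            mul_le_mul_of_nonneg_left husC (by positivity)
          linarith
        rw [hOverLam] at h9
        linarith
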